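/- Let P be a positive homogeneous function on R^d and P̃ a complex-valued continuous function on a neighborhood of 0. The following are equivalent: (a) P̃(ξ) = o(P(ξ)) as ξ → 0; (b) for every E ∈ Exp(P), P̃ is subhomogeneous with respect to E; (c) there exists E ∈ Exp(P) such that P̃ is subhomogeneous with respect to E. -/

import Mathlib

open MeasureTheory Filter Set

/-- The continuous one-parameter group `T_r = r^E = exp((ln r) E)` generated by an
endomorphism `E` of `ℝ^d`. -/
noncomputable def Tgrp {d : ℕ} (E : EuclideanSpace ℝ (Fin d) →L[ℝ] EuclideanSpace ℝ (Fin d))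
    (r : ℝ) : EuclideanSpace ℝ (Fin d) →L[ℝ] EuclideanSpace ℝ (Fin d) :=
  NormedSpace.exp (Real.log r • E)

/-- The group `{T_r}` is contracting: `‖T_r‖ → 0` as `r → 0⁺` (operator norm). -/
def IsContracting {d : ℕ} (E : EuclideanSpace ℝ (Fin d) →L[ℝ] EuclideanSpace ℝ (Fin d)) : Prop :=
  Tendsto (fun r : ℝ => ‖Tgrp E r‖) (nhdsWithin 0 (Set.Ioi 0)) (nhds 0)


/-- `E` is an exponent of `P`: `P(r^E x) = r · P(x)` for all `r > 0` and `x ∈ ℝ^d`. -/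
def IsExpOf {d : ℕ} (P : EuclideanSpace ℝ (Fin d) → ℝ)
    (E : EuclideanSpace ℝ (Fin d) →L[ℝ] EuclideanSpace ℝ (Fin d)) : Prop :=
  ∀ r : ℝ, 0 < r → ∀ x : EuclideanSpace ℝ (Fin d), P (Tgrp E r x) = r * P x

/-- `P` is positive homogeneous: continuous, positive definite, possesses an exponent,
and `P(x) → ∞` as `|x| → ∞`. -/
def IsPosHom {d : ℕ} (P : EuclideanSpace ℝ (Fin d) → ℝ) : Prop :=
  Continuous P ∧ (∀ x, 0 ≤ P x) ∧ (∀ x, P x = 0 → x = 0) ∧ (∃ E, IsExpOf P E) ∧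
    Tendsto P (Filter.cocompact (EuclideanSpace ℝ (Fin d))) Filter.atTop

/-- `Q` is subhomogeneous with respect to `E`: for every `ε > 0` and compact `K`,
there is `δ > 0` with `|Q(r^E ξ)| ≤ ε r` for all `0 < r < δ` and `ξ ∈ K`. -/
def Subhom {d : ℕ} (Q : EuclideanSpace ℝ (Fin d) → ℂ)
    (E : EuclideanSpace ℝ (Fin d) →L[ℝ] EuclideanSpace ℝ (Fin d)) : Prop :=
  ∀ ε : ℝ, 0 < ε → ∀ K : Set (EuclideanSpace ℝ (Fin d)), IsCompact K →
    ∃ δ : ℝ, 0 < δ ∧ ∀ r : ℝ, 0 < r → r < δ → ∀ ξ ∈ K, ‖Q (Tgrp E r ξ)‖ ≤ ε * r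

/-!
Since `P (r^E ξ) = r P ξ`, the dilates `r^E ξ` of points of a compact set `K` lie in the sublevel
set `{P < r · max_K P}`, and these sublevel sets shrink to `0` because `P` is proper and vanishes
only at `0`; so `P̃ = o(P)` at `0` gives `|P̃ (r^E ξ)| ≤ ε r` uniformly on `K`. Conversely, every
`x ≠ 0` is `r^E ξ` with `r = P x` and `ξ` on the compact level set `{P = 1}`, and taking `K = {0}`
forces `P̃ 0 = 0`.
-/

open Topology Asymptotics

section SublevelSets

variable {X α : Type*} [TopologicalSpace X] [TopologicalSpace α] [LinearOrder α]
  [OrderTopology α] [NoMaxOrder α] {f : X → α}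

theorem isCompact_setOf_le_of_tendsto_cocompact (hf : Continuous f)
    (hlim : Tendsto f (cocompact X) atTop) (b : α) : IsCompact {x | f x ≤ b} := by
  obtain ⟨t, ht, hsub⟩ := mem_cocompact'.1 (hlim.eventually_gt_atTop b)
  exact ht.of_isClosed_subset (isClosed_le hf continuous_const) fun x hx ↦ hsub (not_lt.2 hx)

/-- The small sublevel sets lie in a compact set and can only accumulate where `f = f x₀`. -/
theorem comap_nhds_le_of_tendsto_cocompact (hf : Continuous f)
    (hlim : Tendsto f (cocompact X) atTop) {x₀ : X} (hx₀ : ∀ x, f x = f x₀ → x = x₀) :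
    comap f (𝓝 (f x₀)) ≤ 𝓝 x₀ := by
  obtain ⟨b, hb⟩ := exists_gt (f x₀)
  refine (isCompact_setOf_le_of_tendsto_cocompact hf hlim b).le_nhds_of_unique_clusterPt
    (preimage_mem_comap (Iic_mem_nhds hb)) fun x _ hx ↦ hx₀ x ?_
  by_contra hne
  exact (hx.map hf.continuousAt tendsto_comap).ne (disjoint_iff.1 (disjoint_nhds_nhds.2 hne))

end SublevelSets

section Dilations

variable {d : ℕ} {E : EuclideanSpace ℝ (Fin d) →L[ℝ] EuclideanSpace ℝ (Fin d)}
  {P : EuclideanSpace ℝ (Fin d) → ℝ} {Q : EuclideanSpace ℝ (Fin d) → ℂ}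

theorem Tgrp_one (E : EuclideanSpace ℝ (Fin d) →L[ℝ] EuclideanSpace ℝ (Fin d)) :
    Tgrp E 1 = 1 := by
  rw [Tgrp, Real.log_one, zero_smul ℝ E, NormedSpace.exp_zero]

theorem Tgrp_mul (E : EuclideanSpace ℝ (Fin d) →L[ℝ] EuclideanSpace ℝ (Fin d)) {r s : ℝ}
    (hr : 0 < r) (hs : 0 < s) : Tgrp E (r * s) = Tgrp E r * Tgrp E s := by
  have hcomm : Commute (Real.log r • E) (Real.log s • E) := by
    ext x : 1
    simp only [mul_apply_eq_comp, smul_apply, map_smul, smul_smul, mul_comm]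
  have hrad := NormedSpace.expSeries_radius_eq_top ℝ
    (EuclideanSpace ℝ (Fin d) →L[ℝ] EuclideanSpace ℝ (Fin d))
  rw [Tgrp, Real.log_mul hr.ne' hs.ne', add_smul (R := ℝ) _ _ E]
  exact NormedSpace.exp_add_of_commute_of_mem_ball hcomm
    (hrad ▸ edist_lt_top _ _) (hrad ▸ edist_lt_top _ _)

theorem IsExpOf.map_zero (hE : IsExpOf P E) : P 0 = 0 := by
  have h := hE 2 two_pos 0
  rw [_root_.map_zero] at h
  linarith

theorem IsExpOf.exists_Tgrp_eq (hE : IsExpOf P E) {x : EuclideanSpace ℝ (Fin d)}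
    (hx : 0 < P x) : ∃ ξ, P ξ = 1 ∧ Tgrp E (P x) ξ = x := by
  refine ⟨Tgrp E (P x)⁻¹ x, ?_, ?_⟩
  · rw [hE _ (inv_pos.2 hx), inv_mul_cancel₀ hx.ne']
  · rw [← mul_apply_eq_comp, ← Tgrp_mul E hx (inv_pos.2 hx), mul_inv_cancel₀ hx.ne', Tgrp_one,
      one_apply_eq_self]

theorem IsPosHom.exists_forall_lt_of_eventually (hP : IsPosHom P)
    {p : EuclideanSpace ℝ (Fin d) → Prop} (h : ∀ᶠ x in 𝓝 0, p x) :
    ∃ c > 0, ∀ x, P x < c → p x := by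
  obtain ⟨hcont, hnonneg, hdef, ⟨E, hE⟩, hlim⟩ := hP
  have hle := comap_nhds_le_of_tendsto_cocompact hcont hlim (x₀ := 0)
    fun x hx ↦ hdef x (hx.trans hE.map_zero)
  rw [hE.map_zero] at hle
  obtain ⟨c, hc, hsub⟩ := (Metric.nhds_basis_ball.comap P).mem_iff.1 (hle h)
  refine ⟨c, hc, fun x hx ↦ hsub ?_⟩
  rw [mem_preimage, Metric.mem_ball, Real.dist_0_eq_abs, abs_of_nonneg (hnonneg x)]
  exact hx

theorem Subhom.apply_zero (h : Subhom Q E) : Q 0 = 0 := by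
  obtain ⟨δ, hδ, hbound⟩ := h 1 one_pos {0} isCompact_singleton
  have hsmall : ∀ᶠ r in 𝓝[>] (0 : ℝ), ‖Q 0‖ ≤ r := by
    filter_upwards [Ioo_mem_nhdsGT hδ] with r hr
    simpa using hbound r hr.1 hr.2 0 rfl
  exact norm_le_zero_iff.1 (ge_of_tendsto (tendsto_nhdsWithin_of_tendsto_nhds tendsto_id) hsmall)

theorem IsExpOf.subhom_of_isLittleO (hP : IsPosHom P) (hE : IsExpOf P E) (h : Q =o[𝓝 0] P) :
    Subhom Q E := by
  intro ε hε K hK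
  obtain ⟨M, hM, hPM⟩ : ∃ M > 0, ∀ ξ ∈ K, P ξ ≤ M := by
    obtain ⟨M, hM⟩ := hK.bddAbove_image hP.1.continuousOn
    exact ⟨max M 1, by positivity, fun ξ hξ ↦ (hM ⟨ξ, hξ, rfl⟩).trans (le_max_left _ _)⟩
  obtain ⟨c, hc, hbound⟩ := hP.exists_forall_lt_of_eventually (h.bound (div_pos hε hM))
  refine ⟨c / M, div_pos hc hM, fun r hr hrc ξ hξ ↦ ?_⟩
  have hPr : P (Tgrp E r ξ) ≤ r * M := by
    rw [hE r hr ξ]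
    exact mul_le_mul_of_nonneg_left (hPM ξ hξ) hr.le
  calc ‖Q (Tgrp E r ξ)‖ ≤ ε / M * ‖P (Tgrp E r ξ)‖ :=
        hbound _ (hPr.trans_lt ((lt_div_iff₀ hM).1 hrc))
    _ ≤ ε / M * (r * M) := by
        rw [Real.norm_of_nonneg (hP.2.1 _)]
        gcongr
    _ = ε * r := by field_simp

theorem IsExpOf.isLittleO_of_subhom (hP : IsPosHom P) (hE : IsExpOf P E) (h : Subhom Q E) :
    Q =o[𝓝 0] P := by
  obtain ⟨hcont, hnonneg, hdef, -, hlim⟩ := hP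
  have hlevel : IsCompact {x | P x = 1} :=
    (isCompact_setOf_le_of_tendsto_cocompact hcont hlim 1).of_isClosed_subset
      (isClosed_eq hcont continuous_const) fun x hx ↦ hx.le
  refine IsLittleO.of_bound fun c hc ↦ ?_
  obtain ⟨δ, hδ, hbound⟩ := h c hc _ hlevel
  have hnhds : {x | P x < δ} ∈ 𝓝 0 :=
    (isOpen_lt hcont continuous_const).mem_nhds (by simpa [hE.map_zero] using hδ)
  filter_upwards [hnhds] with x hx
  rcases eq_or_ne x 0 with rfl | hx0
  · simp [h.apply_zero, hE.map_zero]
  have hpos : 0 < P x := (hnonneg x).lt_of_ne fun h0 ↦ hx0 (hdef x h0.symm)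
  obtain ⟨ξ, hξ, hξx⟩ := hE.exists_Tgrp_eq hpos
  calc ‖Q x‖ = ‖Q (Tgrp E (P x) ξ)‖ := by rw [hξx]
    _ ≤ c * P x := hbound _ hpos hx ξ hξ
    _ = c * ‖P x‖ := by rw [Real.norm_of_nonneg (hnonneg x)]

end Dilations

theorem subhomogeneous_iff_littleO_general {d : ℕ}
    (P : EuclideanSpace ℝ (Fin d) → ℝ) (hP : IsPosHom P)
    (Ptil : EuclideanSpace ℝ (Fin d) → ℂ) :
    List.TFAE [
      Ptil =o[nhds (0 : EuclideanSpace ℝ (Fin d))] P,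
      ∀ E, IsExpOf P E → Subhom Ptil E,
      ∃ E, IsExpOf P E ∧ Subhom Ptil E] := by
  tfae_have 1 → 2 := fun h E hE ↦ hE.subhom_of_isLittleO hP h
  tfae_have 2 → 3 := fun h ↦ by
    obtain ⟨E, hE⟩ := hP.2.2.2.1
    exact ⟨E, hE, h E hE⟩
  tfae_have 3 → 1 := fun ⟨E, hE, h⟩ ↦ hE.isLittleO_of_subhom hP h
  tfae_finish

/-- For positive homogeneous `P` and continuous (near `0`) `P̃`, the following are
equivalent: (a) `P̃(ξ) = o(P(ξ))` as `ξ → 0`; (b) `P̃` is subhomogeneous with respect to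
every `E ∈ Exp(P)`; (c) `P̃` is subhomogeneous with respect to some `E ∈ Exp(P)`. -/
theorem subhomogeneous_iff_littleO {d : ℕ}
    (P : EuclideanSpace ℝ (Fin d) → ℝ) (hP : IsPosHom P)
    (Ptil : EuclideanSpace ℝ (Fin d) → ℂ)
    (U : Set (EuclideanSpace ℝ (Fin d))) (hU : U ∈ nhds (0 : EuclideanSpace ℝ (Fin d)))
    (hPtil : ContinuousOn Ptil U) :
    List.TFAE [
      Ptil =o[nhds (0 : EuclideanSpace ℝ (Fin d))] P,
      ∀ E, IsExpOf P E → Subhom Ptil E,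
      ∃ E, IsExpOf P E ∧ Subhom Ptil E] :=
  subhomogeneous_iff_littleO_general P hP Ptil
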